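/- Let 𝔄 ⊂ 𝔓 be an antichain, i.e. no two distinct tiles of 𝔄 are comparable under <. If C_M ∈ (0,∞) satisfies ‖M^K f‖_{L²(𝕋^𝐝)} ≤ C_M ‖f‖_{L²(𝕋^𝐝)} for all f ∈ L²(𝕋^𝐝), then ‖T_𝔄 f‖_{L²(𝕋^𝐝)} ≤ C C_M ‖f‖_{L²(𝕋^𝐝)} for all f ∈ L²(𝕋^𝐝), where C depends only on α, 𝐝 and d. -/

import Mathlib

open MeasureTheory Set
open scoped ENNReal NNReal BigOperators

noncomputable section

/-- Euclidean norm on `Fin dd → ℝ`. -/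
def euclNorm {dd : ℕ} (x : Fin dd → ℝ) : ℝ := Real.sqrt (∑ i, (x i) ^ 2)

/-- Anisotropic dilation `δ_r`. -/
def dil {dd : ℕ} (α : Fin dd → ℕ) (r : ℝ) (x : Fin dd → ℝ) : Fin dd → ℝ :=
  fun i => r ^ (α i) * x i

/-- Anisotropic distance function `ρ`. -/
def rho {dd : ℕ} (α : Fin dd → ℕ) (x : Fin dd → ℝ) : ℝ :=
  sInf {r : ℝ | 0 < r ∧ euclNorm (dil α r⁻¹ x) ≤ 1}

/-- `|α| = Σ αᵢ`. -/
def absA {dd : ℕ} (α : Fin dd → ℕ) : ℕ := ∑ i, α i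

/-- The space `𝒬` of real polynomials of degree at most `d` without constant term. -/
def QSpace (dd d : ℕ) : Set (MvPolynomial (Fin dd) ℝ) :=
  {Q | Q.totalDegree ≤ d ∧ MvPolynomial.coeff 0 Q = 0}

/-- `‖Q‖_I`. -/
def qnorm {dd : ℕ} (Q : MvPolynomial (Fin dd) ℝ) (I : Set (Fin dd → ℝ)) : ℝ :=
  ⨆ x ∈ I, ⨆ y ∈ I, |MvPolynomial.eval x Q - MvPolynomial.eval y Q|

/-- `B_I(Q, r)`. -/
def qball {dd : ℕ} (d : ℕ) (I : Set (Fin dd → ℝ)) (Q : MvPolynomial (Fin dd) ℝ) (r : ℝ) :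
    Set (MvPolynomial (Fin dd) ℝ) :=
  {Q' ∈ QSpace dd d | qnorm (Q' - Q) I ≤ r}

/-- Fundamental domain `[-1/2, 1/2)^dd` of the torus. -/
def cube (dd : ℕ) : Set (Fin dd → ℝ) := {x | ∀ i, -(1/2 : ℝ) ≤ x i ∧ x i < 1/2}

/-- `ℤ^dd`-periodicity. -/
def PeriodicZ {dd : ℕ} {E : Type*} (f : (Fin dd → ℝ) → E) : Prop :=
  ∀ (k : Fin dd → ℤ) (x : Fin dd → ℝ), f (x + fun i => (k i : ℝ)) = f x

/-- Torus measure. -/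
def μT (dd : ℕ) : Measure (Fin dd → ℝ) := volume.restrict (cube dd)

/-- An anisotropic `D`-adic cube, given by its scale `s` and position `k`. -/
structure DCube (dd : ℕ) where
  s : ℤ
  k : Fin dd → ℤ

/-- The cube `x + δ_{D^s}([0,1)^dd)` with `x = δ_{D^s}(k)`, as a subset of `ℝ^dd`. -/
def DCube.toSet {dd : ℕ} (α : Fin dd → ℕ) (D : ℕ) (J : DCube dd) : Set (Fin dd → ℝ) :=
  {x | ∀ i, (D : ℝ) ^ (J.s * (α i : ℤ)) * J.k i ≤ x i ∧
            x i < (D : ℝ) ^ (J.s * (α i : ℤ)) * (J.k i + 1)}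

/-- Membership in the grid `𝒟`: nonpositive scale and base point in `[0,1)^dd`. -/
def DCube.valid {dd : ℕ} (α : Fin dd → ℕ) (D : ℕ) (J : DCube dd) : Prop :=
  J.s ≤ 0 ∧ ∀ i, 0 ≤ J.k i ∧ (D : ℝ) ^ (J.s * (α i : ℤ)) * J.k i < 1

/-- `I*`: the union of `I` and its neighbours. -/
def DCube.star {dd : ℕ} (α : Fin dd → ℕ) (D : ℕ) (J : DCube dd) : Set (Fin dd → ℝ) :=
  {x | ∀ i, (D : ℝ) ^ (J.s * (α i : ℤ)) * (J.k i - 1) ≤ x i ∧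
            x i < (D : ℝ) ^ (J.s * (α i : ℤ)) * (J.k i + 2)}

/-- A tile. -/
structure Tile (dd : ℕ) where
  I : DCube dd
  Q : Set (MvPolynomial (Fin dd) ℝ)
  c : MvPolynomial (Fin dd) ℝ

/-- The defining conditions of a tile. -/
def IsTile {dd : ℕ} (α : Fin dd → ℕ) (D d : ℕ) (s_min s_max : ℤ) (p : Tile dd) : Prop :=
  p.I.valid α D ∧ s_min ≤ p.I.s ∧ p.I.s ≤ s_max ∧ p.c ∈ p.Q ∧
  qball d (p.I.toSet α D) p.c 0.2 ⊆ p.Q ∧ p.Q ⊆ qball d (p.I.toSet α D) p.c 1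

/-- The order `𝔭 ≤ 𝔭'` on tiles. -/
def Tile.le {dd : ℕ} (α : Fin dd → ℕ) (D : ℕ) (p p' : Tile dd) : Prop :=
  p.I.toSet α D ⊆ p'.I.toSet α D ∧ p'.Q ⊆ p.Q

/-- The strict order `𝔭 < 𝔭'` on tiles. -/
def Tile.lt {dd : ℕ} (α : Fin dd → ℕ) (D : ℕ) (p p' : Tile dd) : Prop :=
  Tile.le α D p p' ∧ p.I.toSet α D ≠ p'.I.toSet α D

/-- The standing hypotheses on the collection `𝔓` of all tiles. -/
def GoodCollection {dd : ℕ} (α : Fin dd → ℕ) (D d : ℕ) (s_min s_max : ℤ)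
    (𝔓 : Set (Tile dd)) : Prop :=
  (∀ p ∈ 𝔓, IsTile α D d s_min s_max p) ∧
  (∀ I : DCube dd, I.valid α D → s_min ≤ I.s → I.s ≤ s_max →
    ∀ Q ∈ QSpace dd d, ∃ p ∈ 𝔓, p.I = I ∧ Q ∈ p.Q) ∧
  (∀ p ∈ 𝔓, ∀ p' ∈ 𝔓, p.I = p'.I → p ≠ p' → p.Q ∩ p'.Q = ∅) ∧
  (∀ p ∈ 𝔓, ∀ p' ∈ 𝔓, p.I.toSet α D ⊆ p'.I.toSet α D → p.Q ∩ p'.Q = ∅ ∨ p'.Q ⊆ p.Q)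

/-- The conditions on the kernels `K_s`. -/
def KsCond {dd : ℕ} (α : Fin dd → ℕ) (D : ℕ) (A : ℝ) (s_min s_max : ℤ)
    (Ks : ℤ → (Fin dd → ℝ) → ℂ) : Prop :=
  ∀ s : ℤ, s_min ≤ s → s ≤ s_max →
    (∀ x, ‖Ks s x‖ ≤ A * (D : ℝ) ^ (-(s * (absA α : ℤ)))) ∧
    (∀ x x', ‖Ks s x - Ks s x'‖ ≤
        A * rho α (x - x') / (D : ℝ) ^ (s * (1 + (absA α : ℤ)))) ∧
    (∀ x, Ks s x ≠ 0 → (D : ℝ) ^ (s - 1) / 8 ≤ rho α x ∧ rho α x ≤ (D : ℝ) ^ s / 4)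

/-- The conditions on the stopping functions. -/
def GoodStopping {dd : ℕ} (d : ℕ) (s_min s_max : ℤ)
    (Qx : (Fin dd → ℝ) → MvPolynomial (Fin dd) ℝ) (σ1 σ2 : (Fin dd → ℝ) → ℤ) : Prop :=
  (∀ x, Qx x ∈ QSpace dd d) ∧ (Set.range Qx).Finite ∧
  (∀ x, s_min ≤ σ1 x ∧ σ1 x ≤ σ2 x ∧ σ2 x ≤ s_max) ∧
  (Set.range σ1).Finite ∧ (Set.range σ2).Finite

/-- `E(𝔭)`. -/
def Etile {dd : ℕ} (α : Fin dd → ℕ) (D : ℕ)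
    (Qx : (Fin dd → ℝ) → MvPolynomial (Fin dd) ℝ) (σ1 σ2 : (Fin dd → ℝ) → ℤ)
    (p : Tile dd) : Set (Fin dd → ℝ) :=
  {x | x ∈ p.I.toSet α D ∧ Qx x ∈ p.Q ∧ σ1 x ≤ p.I.s ∧ p.I.s ≤ σ2 x}

/-- `Ē(a𝔭')`. -/
def EbarA {dd : ℕ} (α : Fin dd → ℕ) (D d : ℕ)
    (Qx : (Fin dd → ℝ) → MvPolynomial (Fin dd) ℝ) (p' : Tile dd) (a : ℝ) :
    Set (Fin dd → ℝ) :=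
  {x | x ∈ p'.I.toSet α D ∧ Qx x ∈ qball d (p'.I.toSet α D) p'.c a}

/-- The tile operator `T_𝔭`. -/
def Ttile {dd : ℕ} (α : Fin dd → ℕ) (D : ℕ) (Ks : ℤ → (Fin dd → ℝ) → ℂ)
    (Qx : (Fin dd → ℝ) → MvPolynomial (Fin dd) ℝ) (σ1 σ2 : (Fin dd → ℝ) → ℤ)
    (p : Tile dd) (f : (Fin dd → ℝ) → ℂ) (x : Fin dd → ℝ) : ℂ :=
  Set.indicator (Etile α D Qx σ1 σ2 p)
    (fun x => ∫ y in {y | y - x ∈ cube dd},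
      Ks p.I.s (x - y) *
        Complex.exp (Complex.I *
          ((MvPolynomial.eval x (Qx x) - MvPolynomial.eval y (Qx x) : ℝ) : ℂ)) * f y) x

/-- The adjoint tile operator `T_𝔭^*`. -/
def TtileStar {dd : ℕ} (α : Fin dd → ℕ) (D : ℕ) (Ks : ℤ → (Fin dd → ℝ) → ℂ)
    (Qx : (Fin dd → ℝ) → MvPolynomial (Fin dd) ℝ) (σ1 σ2 : (Fin dd → ℝ) → ℤ)
    (p : Tile dd) (g : (Fin dd → ℝ) → ℂ) (y : Fin dd → ℝ) : ℂ :=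
  ∫ x in {x | x - y ∈ cube dd},
    Complex.exp (Complex.I *
        ((MvPolynomial.eval y (Qx x) - MvPolynomial.eval x (Qx x) : ℝ) : ℂ)) *
      (starRingEnd ℂ) (Ks p.I.s (x - y)) *
      Set.indicator (Etile α D Qx σ1 σ2 p) g x

/-- `T_𝔖 = Σ_{𝔭 ∈ 𝔖} T_𝔭`. -/
def Tsum {dd : ℕ} (α : Fin dd → ℕ) (D : ℕ) (Ks : ℤ → (Fin dd → ℝ) → ℂ)
    (Qx : (Fin dd → ℝ) → MvPolynomial (Fin dd) ℝ) (σ1 σ2 : (Fin dd → ℝ) → ℤ)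
    (𝔖 : Set (Tile dd)) (f : (Fin dd → ℝ) → ℂ) (x : Fin dd → ℝ) : ℂ :=
  ∑ᶠ p ∈ 𝔖, Ttile α D Ks Qx σ1 σ2 p f x

/-- `T_𝔖^* = Σ_{𝔭 ∈ 𝔖} T_𝔭^*`. -/
def TsumStar {dd : ℕ} (α : Fin dd → ℕ) (D : ℕ) (Ks : ℤ → (Fin dd → ℝ) → ℂ)
    (Qx : (Fin dd → ℝ) → MvPolynomial (Fin dd) ℝ) (σ1 σ2 : (Fin dd → ℝ) → ℤ)
    (𝔖 : Set (Tile dd)) (g : (Fin dd → ℝ) → ℂ) (y : Fin dd → ℝ) : ℂ :=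
  ∑ᶠ p ∈ 𝔖, TtileStar α D Ks Qx σ1 σ2 p g y

/-- The maximal average `M^K`. -/
def MKT {dd : ℕ} (s_min s_max : ℤ) (Ks : ℤ → (Fin dd → ℝ) → ℂ)
    (f : (Fin dd → ℝ) → ℂ) (x : Fin dd → ℝ) : ℝ≥0∞ :=
  ⨆ s : ℤ, ⨆ _ : s_min ≤ s ∧ s ≤ s_max,
    ∫⁻ y in {y | y - x ∈ cube dd}, (‖Ks s (x - y)‖₊ : ℝ≥0∞) * (‖f y‖₊ : ℝ≥0∞)

/-- The maximally truncated singular integral `R^K`. -/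
def RKT {dd : ℕ} (s_min s_max : ℤ) (Ks : ℤ → (Fin dd → ℝ) → ℂ)
    (f : (Fin dd → ℝ) → ℂ) (x : Fin dd → ℝ) : ℝ≥0∞ :=
  ⨆ σa : ℤ, ⨆ σb : ℤ, ⨆ _ : s_min ≤ σa ∧ σa ≤ σb ∧ σb ≤ s_max,
    ENNReal.ofReal
      ‖∑ s ∈ Finset.Icc σa σb, ∫ y in {y | y - x ∈ cube dd}, Ks s (x - y) * f y‖

/-- `L²`-norm on the torus of an `ℝ≥0∞`-valued function. -/
def eL2T {dd : ℕ} (g : (Fin dd → ℝ) → ℝ≥0∞) : ℝ≥0∞ :=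
  (∫⁻ x in cube dd, g x ^ (2:ℝ)) ^ (1/2 : ℝ)

/-- `dim 𝒬 = C(d+dd, dd) - 1`. -/
def dimQ (dd d : ℕ) : ℕ := Nat.choose (d + dd) dd - 1

/-- `a𝔭 ≤ a𝔭'`. -/
def TileLeA {dd : ℕ} (α : Fin dd → ℕ) (D d : ℕ) (a : ℝ) (p p' : Tile dd) : Prop :=
  p.I.toSet α D ⊆ p'.I.toSet α D ∧
  qball d (p'.I.toSet α D) p'.c a ⊆ qball d (p.I.toSet α D) p.c a

/-- The density of a tile. -/
def dens {dd : ℕ} (α : Fin dd → ℕ) (D d : ℕ) (𝔓 : Set (Tile dd))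
    (Qx : (Fin dd → ℝ) → MvPolynomial (Fin dd) ℝ) (p : Tile dd) : ℝ≥0∞ :=
  ⨆ a : ℝ, ⨆ _ : 2 ≤ a, ⨆ p' : Tile dd, ⨆ _ : p' ∈ 𝔓 ∧ TileLeA α D d a p p',
    ENNReal.ofReal (a ^ (-(dimQ dd d : ℝ))) *
      (volume (EbarA α D d Qx p' a) / volume (p'.I.toSet α D))

/-- The density of a collection of tiles. -/
def densS {dd : ℕ} (α : Fin dd → ℕ) (D d : ℕ) (𝔓 : Set (Tile dd))
    (Qx : (Fin dd → ℝ) → MvPolynomial (Fin dd) ℝ) (𝔖 : Set (Tile dd)) : ℝ≥0∞ :=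
  ⨆ p ∈ 𝔖, dens α D d 𝔓 Qx p

/-- `Δ(𝔭, Q) = ‖Q_𝔭 − Q‖_{I_𝔭} + 1`. -/
def ΔT {dd : ℕ} (α : Fin dd → ℕ) (D : ℕ) (p : Tile dd)
    (Q : MvPolynomial (Fin dd) ℝ) : ℝ :=
  qnorm (p.c - Q) (p.I.toSet α D) + 1

/-- `4𝔭 < 𝔭'`. -/
def fourLt {dd : ℕ} (α : Fin dd → ℕ) (D d : ℕ) (p p' : Tile dd) : Prop :=
  p.I.toSet α D ⊆ p'.I.toSet α D ∧ p.I.toSet α D ≠ p'.I.toSet α D ∧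
  p'.Q ⊆ qball d (p.I.toSet α D) p.c 4

/-- A tree with top tile `top`. -/
def IsTree {dd : ℕ} (α : Fin dd → ℕ) (D d : ℕ) (𝔓 𝔗 : Set (Tile dd))
    (top : Tile dd) : Prop :=
  𝔗 ⊆ 𝔓 ∧ top ∈ 𝔓 ∧
  (∀ p p'' p', p ∈ 𝔗 → p' ∈ 𝔗 → p'' ∈ 𝔓 →
    Tile.le α D p p'' → Tile.le α D p'' p' → p'' ∈ 𝔗) ∧
  (∀ p ∈ 𝔗, fourLt α D d p top)

/-- A normal tree. -/
def IsNormalTree {dd : ℕ} (α : Fin dd → ℕ) (D d : ℕ) (𝔓 𝔗 : Set (Tile dd))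
    (top : Tile dd) : Prop :=
  IsTree α D d 𝔓 𝔗 top ∧ ∀ p ∈ 𝔗, p.I.star α D ⊆ top.I.toSet α D

/-- `Δ`-separation of two trees. -/
def Separated {dd : ℕ} (α : Fin dd → ℕ) (D : ℕ) (Δ : ℝ)
    (𝔗₁ : Set (Tile dd)) (t₁ : Tile dd) (𝔗₂ : Set (Tile dd)) (t₂ : Tile dd) : Prop :=
  (∀ p ∈ 𝔗₁, p.I.toSet α D ⊆ t₂.I.toSet α D → Δ < ΔT α D p t₂.c) ∧
  (∀ p ∈ 𝔗₂, p.I.toSet α D ⊆ t₁.I.toSet α D → Δ < ΔT α D p t₁.c)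

end


/-! The sets `E(𝔭)` of distinct tiles of an antichain are disjoint. If `x` lies in both, the
nesting of `D`-adic cubes gives `I_𝔭 ⊆ I_𝔭'` (say); as `Q_x ∈ 𝒬(𝔭) ∩ 𝒬(𝔭')`, the tile axioms
give `𝔭 ≤ 𝔭'`, so the antichain property forces `I_𝔭 = I_𝔭'`, and tiles with the same cube have
disjoint `𝒬`'s. Hence at every point at most one `T_𝔭 f(x)` is nonzero, and since the phase has
modulus one it is bounded by `M^K f(x)`: the estimate holds with `C = 1`. (When `α = 0` the
distance `ρ` vanishes identically and the support condition kills every kernel.) -/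
lemma DCube.toSet_eq_pi {dd : ℕ} (α : Fin dd → ℕ) (D : ℕ) (J : DCube dd) :
    J.toSet α D = univ.pi fun i =>
      Ico ((D : ℝ) ^ (J.s * (α i : ℤ)) * J.k i) ((D : ℝ) ^ (J.s * (α i : ℤ)) * (J.k i + 1)) := by
  ext x
  simp [DCube.toSet]

lemma Ico_mul_subset_Ico_mul_of_mem {h : ℝ} (hh : 0 < h) {N k m : ℤ} {x : ℝ}
    (hx : x ∈ Ico (h * k) (h * (k + 1))) (hx' : x ∈ Ico (h * N * m) (h * N * (m + 1))) :
    Ico (h * k) (h * (k + 1)) ⊆ Ico (h * N * m) (h * N * (m + 1)) := by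
  rw [mul_assoc, mul_assoc] at hx' ⊢
  have hk : (k : ℝ) < N * (m + 1) := (mul_lt_mul_iff_right₀ hh).1 (hx.1.trans_lt hx'.2)
  have hm : (N : ℝ) * m < k + 1 := (mul_lt_mul_iff_right₀ hh).1 (hx'.1.trans_lt hx.2)
  have hk' : k + 1 ≤ N * (m + 1) := by
    have : k < N * (m + 1) := by exact_mod_cast hk
    omega
  have hm' : N * m ≤ k := by
    have : N * m < k + 1 := by exact_mod_cast hm
    omega
  apply Ico_subset_Ico <;> gcongr <;> exact_mod_cast ‹_›

lemma zpow_mul_eq_zpow_mul_natCast {D : ℕ} (hD : D ≠ 0) (a : ℕ) {s s' : ℤ} (hs : s ≤ s') :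
    (D : ℝ) ^ (s' * (a : ℤ)) =
      (D : ℝ) ^ (s * (a : ℤ)) * ((D ^ ((s' - s) * (a : ℤ)).toNat : ℕ) : ℝ) := by
  have hnn : 0 ≤ (s' - s) * (a : ℤ) := mul_nonneg (by omega) (Int.natCast_nonneg _)
  rw [Nat.cast_pow, ← zpow_natCast, Int.toNat_of_nonneg hnn, ← zpow_add₀]
  · ring_nf
  · exact_mod_cast hD

lemma DCube.toSet_subset_of_mem {dd : ℕ} (α : Fin dd → ℕ) {D : ℕ} (hD : 0 < D)
    {J J' : DCube dd} (hs : J.s ≤ J'.s) {x : Fin dd → ℝ}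
    (hx : x ∈ J.toSet α D) (hx' : x ∈ J'.toSet α D) : J.toSet α D ⊆ J'.toSet α D := by
  intro y hy i
  have hh : (0 : ℝ) < (D : ℝ) ^ (J.s * (α i : ℤ)) := zpow_pos (by exact_mod_cast hD) _
  have hx'i := hx' i
  rw [zpow_mul_eq_zpow_mul_natCast (by omega) (α i) hs] at hx'i ⊢
  exact_mod_cast Ico_mul_subset_Ico_mul_of_mem hh (hx i) (by exact_mod_cast hx'i) (hy i)

lemma DCube.toSet_injective {dd : ℕ} {α : Fin dd → ℕ} (hα : ∃ i, α i ≠ 0) {D : ℕ}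
    (hD : 1 < D) : Function.Injective (DCube.toSet α D) := by
  intro J J' h
  have hD0 : (0 : ℝ) < D := by exact_mod_cast (zero_lt_one.trans hD)
  have hside : ∀ (J : DCube dd) i, (D : ℝ) ^ (J.s * (α i : ℤ)) * J.k i <
      (D : ℝ) ^ (J.s * (α i : ℤ)) * (J.k i + 1) := fun J i => by gcongr; exact lt_add_one _
  have hne : ∀ J : DCube dd, (univ.pi fun i => Ico ((D : ℝ) ^ (J.s * (α i : ℤ)) * J.k i)
      ((D : ℝ) ^ (J.s * (α i : ℤ)) * (J.k i + 1))).Nonempty :=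
    fun J => univ_pi_nonempty_iff.2 fun i => nonempty_Ico.2 (hside J i)
  have hends : ∀ i, (D : ℝ) ^ (J.s * (α i : ℤ)) * J.k i = (D : ℝ) ^ (J'.s * (α i : ℤ)) * J'.k i ∧
      (D : ℝ) ^ (J.s * (α i : ℤ)) * (J.k i + 1) =
        (D : ℝ) ^ (J'.s * (α i : ℤ)) * (J'.k i + 1) := by
    intro i
    rw [← Ico_eq_Ico_iff (Or.inl (hside J i)), ← eval_image_univ_pi (i := i) (hne J),
      ← eval_image_univ_pi (i := i) (hne J'), ← DCube.toSet_eq_pi, ← DCube.toSet_eq_pi, h]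
  have hlen : ∀ i, (D : ℝ) ^ (J.s * (α i : ℤ)) = (D : ℝ) ^ (J'.s * (α i : ℤ)) := fun i => by
    linarith [hends i]
  obtain ⟨i, hi⟩ := hα
  have hs : J.s = J'.s := by
    have := zpow_right_injective₀ hD0 (by exact_mod_cast hD.ne') (hlen i)
    exact mul_right_cancel₀ (by exact_mod_cast hi) this
  have hk : J.k = J'.k := funext fun i => by
    have := (hends i).1
    rw [hlen i] at this
    exact_mod_cast mul_left_cancel₀ (zpow_pos hD0 _).ne' this
  cases J; cases J'
  simp_all

lemma Etile_pairwiseDisjoint_of_antichain {dd : ℕ} {α : Fin dd → ℕ} (hα : ∃ i, α i ≠ 0)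
    {D d : ℕ} (hD : 1 < D) {s_min s_max : ℤ} {𝔓 𝔄 : Set (Tile dd)}
    (h𝔓 : GoodCollection α D d s_min s_max 𝔓) (h𝔄 : 𝔄 ⊆ 𝔓)
    (hanti : ∀ p ∈ 𝔄, ∀ p' ∈ 𝔄, ¬ Tile.lt α D p p')
    (Qx : (Fin dd → ℝ) → MvPolynomial (Fin dd) ℝ) (σ1 σ2 : (Fin dd → ℝ) → ℤ) :
    𝔄.PairwiseDisjoint (Etile α D Qx σ1 σ2) := by
  intro p hp p' hp' hne
  wlog hs : p.I.s ≤ p'.I.s generalizing p p'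
  · exact (this hp' hp hne.symm (le_of_not_ge hs)).symm
  rw [Function.onFun, Set.disjoint_left]
  intro x hx hx'
  have hQ : Qx x ∈ p.Q ∩ p'.Q := ⟨hx.2.1, hx'.2.1⟩
  have hI := DCube.toSet_subset_of_mem α (zero_lt_one.trans hD) hs hx.1 hx'.1
  rcases h𝔓.2.2.2 p (h𝔄 hp) p' (h𝔄 hp') hI with hdisj | hle
  · exact hdisj.subset hQ
  by_cases heq : p.I.toSet α D = p'.I.toSet α D
  · exact (h𝔓.2.2.1 p (h𝔄 hp) p' (h𝔄 hp') (DCube.toSet_injective hα hD heq) hne).subset hQ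
  · exact hanti p hp p' hp' ⟨⟨hI, hle⟩, heq⟩

lemma rho_eq_zero_of_forall_eq_zero {dd : ℕ} {α : Fin dd → ℕ} (hα : ∀ i, α i = 0)
    (x : Fin dd → ℝ) : rho α x = 0 := by
  have hdil : ∀ r, dil α r x = x := fun r => funext fun i => by simp [dil, hα]
  by_cases hx : euclNorm x ≤ 1
  · have : {r : ℝ | 0 < r ∧ euclNorm (dil α r⁻¹ x) ≤ 1} = Ioi 0 := by
      ext r
      simp [hdil, hx]
    rw [rho, this, csInf_Ioi]
  · have : {r : ℝ | 0 < r ∧ euclNorm (dil α r⁻¹ x) ≤ 1} = ∅ := by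
      ext r
      simp [hdil, hx]
    rw [rho, this, Real.sInf_empty]

lemma KsCond.eq_zero_of_rho_eq_zero {dd : ℕ} {α : Fin dd → ℕ} {D : ℕ} (hD : D ≠ 0) {A : ℝ}
    {s_min s_max : ℤ} {Ks : ℤ → (Fin dd → ℝ) → ℂ} (hK : KsCond α D A s_min s_max Ks)
    (hρ : ∀ x, rho α x = 0) {s : ℤ} (hs₁ : s_min ≤ s) (hs₂ : s ≤ s_max) (x : Fin dd → ℝ) :
    Ks s x = 0 := by
  by_contra hx
  have := ((hK s hs₁ hs₂).2.2 x hx).1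
  rw [hρ] at this
  have : (0 : ℝ) < (D : ℝ) ^ (s - 1) / 8 := by positivity
  linarith

lemma enorm_finsum_mem_le_iSup_of_subsingleton {ι E : Type*} [NormedAddCommGroup E]
    {s : Set ι} {g : ι → E} (h : (s ∩ Function.support g).Subsingleton) :
    ‖∑ᶠ i ∈ s, g i‖ₑ ≤ ⨆ i ∈ s, ‖g i‖ₑ := by
  rw [← finsum_mem_inter_support]
  rcases h.eq_empty_or_singleton with h | ⟨i, hi⟩
  · simp [h]
  · have his : i ∈ s := (hi ▸ mem_singleton i : i ∈ s ∩ _).1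
    rw [hi, finsum_mem_singleton]
    exact le_iSup₂ (f := fun i _ => ‖g i‖ₑ) i his

lemma enorm_Ttile_le_MKT {dd : ℕ} (α : Fin dd → ℕ) (D : ℕ) {s_min s_max : ℤ}
    (Ks : ℤ → (Fin dd → ℝ) → ℂ) (Qx : (Fin dd → ℝ) → MvPolynomial (Fin dd) ℝ)
    (σ1 σ2 : (Fin dd → ℝ) → ℤ) {p : Tile dd} (hs₁ : s_min ≤ p.I.s) (hs₂ : p.I.s ≤ s_max)
    (f : (Fin dd → ℝ) → ℂ) (x : Fin dd → ℝ) :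
    ‖Ttile α D Ks Qx σ1 σ2 p f x‖ₑ ≤ MKT s_min s_max Ks f x := by
  calc ‖Ttile α D Ks Qx σ1 σ2 p f x‖ₑ
      ≤ ∫⁻ y in {y | y - x ∈ cube dd}, ‖Ks p.I.s (x - y) *
          Complex.exp (Complex.I *
            ((MvPolynomial.eval x (Qx x) - MvPolynomial.eval y (Qx x) : ℝ) : ℂ)) * f y‖ₑ :=
        le_trans (enorm_indicator_le_enorm_self _ _) (enorm_integral_le_lintegral_enorm _)
    _ = ∫⁻ y in {y | y - x ∈ cube dd}, (‖Ks p.I.s (x - y)‖₊ : ℝ≥0∞) * (‖f y‖₊ : ℝ≥0∞) := by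
        simp only [enorm_mul, Complex.enorm_exp_I_mul_ofReal, mul_one]
        rfl
    _ ≤ MKT s_min s_max Ks f x := le_iSup₂_of_le (f := fun s (_ : s_min ≤ s ∧ s ≤ s_max) =>
        ∫⁻ y in {y | y - x ∈ cube dd}, (‖Ks s (x - y)‖₊ : ℝ≥0∞) * (‖f y‖₊ : ℝ≥0∞))
          p.I.s ⟨hs₁, hs₂⟩ le_rfl

lemma eLpNorm_le_eL2T_of_enorm_le {dd : ℕ} {E : Type*} [NormedAddCommGroup E]
    {g : (Fin dd → ℝ) → E} {G : (Fin dd → ℝ) → ℝ≥0∞} (h : ∀ x, ‖g x‖ₑ ≤ G x) :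
    eLpNorm g 2 (μT dd) ≤ eL2T G := by
  rw [eLpNorm_eq_lintegral_rpow_enorm_toReal two_ne_zero ENNReal.ofNat_ne_top, eL2T, μT,
    ENNReal.toReal_ofNat]
  gcongr
  exact h _

lemma subsingleton_support_Ttile_of_antichain {dd : ℕ} {α : Fin dd → ℕ} {D d : ℕ}
    (hD : 1 < D) {A : ℝ} {s_min s_max : ℤ} {Ks : ℤ → (Fin dd → ℝ) → ℂ}
    (hK : KsCond α D A s_min s_max Ks) {𝔓 𝔄 : Set (Tile dd)}
    (h𝔓 : GoodCollection α D d s_min s_max 𝔓) (h𝔄 : 𝔄 ⊆ 𝔓)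
    (hanti : ∀ p ∈ 𝔄, ∀ p' ∈ 𝔄, ¬ Tile.lt α D p p')
    (Qx : (Fin dd → ℝ) → MvPolynomial (Fin dd) ℝ) (σ1 σ2 : (Fin dd → ℝ) → ℤ)
    (f : (Fin dd → ℝ) → ℂ) (x : Fin dd → ℝ) :
    (𝔄 ∩ Function.support fun p => Ttile α D Ks Qx σ1 σ2 p f x).Subsingleton := by
  by_cases hα : ∃ i, α i ≠ 0
  · have hE : ∀ p, Ttile α D Ks Qx σ1 σ2 p f x ≠ 0 → x ∈ Etile α D Qx σ1 σ2 p :=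
      fun p hp => by_contra fun hx => hp (indicator_of_notMem hx _)
    rintro p ⟨hp, hpx⟩ p' ⟨hp', hp'x⟩
    by_contra hne
    exact Set.disjoint_left.1
      (Etile_pairwiseDisjoint_of_antichain hα hD h𝔓 h𝔄 hanti Qx σ1 σ2 hp hp' hne)
      (hE p hpx) (hE p' hp'x)
  · push Not at hα
    rintro p ⟨hp, hpx⟩
    have ht := (h𝔓.1 p (h𝔄 hp)).2
    have hK0 := hK.eq_zero_of_rho_eq_zero (by omega) (rho_eq_zero_of_forall_eq_zero hα)
      ht.1 ht.2.1
    simp [Ttile, hK0] at hpx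

lemma enorm_Tsum_le_MKT_of_antichain {dd : ℕ} {α : Fin dd → ℕ} {D d : ℕ}
    (hD : 1 < D) {A : ℝ} {s_min s_max : ℤ} {Ks : ℤ → (Fin dd → ℝ) → ℂ}
    (hK : KsCond α D A s_min s_max Ks) {𝔓 𝔄 : Set (Tile dd)}
    (h𝔓 : GoodCollection α D d s_min s_max 𝔓) (h𝔄 : 𝔄 ⊆ 𝔓)
    (hanti : ∀ p ∈ 𝔄, ∀ p' ∈ 𝔄, ¬ Tile.lt α D p p')
    (Qx : (Fin dd → ℝ) → MvPolynomial (Fin dd) ℝ) (σ1 σ2 : (Fin dd → ℝ) → ℤ)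
    (f : (Fin dd → ℝ) → ℂ) (x : Fin dd → ℝ) :
    ‖Tsum α D Ks Qx σ1 σ2 𝔄 f x‖ₑ ≤ MKT s_min s_max Ks f x :=
  (enorm_finsum_mem_le_iSup_of_subsingleton
    (subsingleton_support_Ttile_of_antichain hD hK h𝔓 h𝔄 hanti Qx σ1 σ2 f x)).trans <|
    iSup₂_le fun p hp => have ht := (h𝔓.1 p (h𝔄 hp)).2
      enorm_Ttile_le_MKT α D Ks Qx σ1 σ2 ht.1 ht.2.1 f x

noncomputable section

theorem statement11_general (dd d : ℕ) (α : Fin dd → ℕ) :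
    ∃ (C : ℝ) (D₀ : ℕ), 0 < C ∧
      ∀ (D : ℕ), D₀ ≤ D → (∃ k : ℕ, D = 2 ^ k) →
      ∀ (A : ℝ), 0 < A →
      ∀ (s_min s_max : ℤ), s_min ≤ s_max → s_max ≤ 0 →
      ∀ (Ks : ℤ → (Fin dd → ℝ) → ℂ), KsCond α D A s_min s_max Ks →
      ∀ (𝔓 : Set (Tile dd)), GoodCollection α D d s_min s_max 𝔓 →
      ∀ (Qx : (Fin dd → ℝ) → MvPolynomial (Fin dd) ℝ) (σ1 σ2 : (Fin dd → ℝ) → ℤ),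
        GoodStopping d s_min s_max Qx σ1 σ2 →
        (∀ p ∈ 𝔓, MeasurableSet (Etile α D Qx σ1 σ2 p)) →
      ∀ (𝔄 : Set (Tile dd)), 𝔄 ⊆ 𝔓 → 𝔄.Finite →
        (∀ p ∈ 𝔄, ∀ p' ∈ 𝔄, ¬ Tile.lt α D p p') →
      ∀ (C_M : ℝ), 0 < C_M →
        (∀ f : (Fin dd → ℝ) → ℂ, Measurable f → PeriodicZ f →
          eL2T (MKT s_min s_max Ks f) ≤ ENNReal.ofReal C_M * eLpNorm f 2 (μT dd)) →
      ∀ f : (Fin dd → ℝ) → ℂ, Measurable f → PeriodicZ f →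
        eLpNorm (Tsum α D Ks Qx σ1 σ2 𝔄 f) 2 (μT dd) ≤
          ENNReal.ofReal (C * C_M) * eLpNorm f 2 (μT dd) := by
  refine ⟨1, 2, one_pos, ?_⟩
  intro D hD _ A _ s_min s_max _ _ Ks hK 𝔓 h𝔓 Qx σ1 σ2 _ _ 𝔄 h𝔄 _ hanti C_M _ hM f hf hfp
  calc eLpNorm (Tsum α D Ks Qx σ1 σ2 𝔄 f) 2 (μT dd)
      ≤ eL2T (MKT s_min s_max Ks f) := eLpNorm_le_eL2T_of_enorm_le
        (enorm_Tsum_le_MKT_of_antichain hD hK h𝔓 h𝔄 hanti Qx σ1 σ2 f)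
    _ ≤ ENNReal.ofReal (1 * C_M) * eLpNorm f 2 (μT dd) := by rw [one_mul]; exact hM f hf hfp

theorem statement11 (dd d : ℕ) (α : Fin dd → ℕ) (hα : ∀ i, 0 < α i) (hmono : Monotone α) :
    ∃ (C : ℝ) (D₀ : ℕ), 0 < C ∧
      ∀ (D : ℕ), D₀ ≤ D → (∃ k : ℕ, D = 2 ^ k) →
      ∀ (A : ℝ), 0 < A →
      ∀ (s_min s_max : ℤ), s_min ≤ s_max → s_max ≤ 0 →
      ∀ (Ks : ℤ → (Fin dd → ℝ) → ℂ), KsCond α D A s_min s_max Ks →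
      ∀ (𝔓 : Set (Tile dd)), GoodCollection α D d s_min s_max 𝔓 →
      ∀ (Qx : (Fin dd → ℝ) → MvPolynomial (Fin dd) ℝ) (σ1 σ2 : (Fin dd → ℝ) → ℤ),
        GoodStopping d s_min s_max Qx σ1 σ2 →
        (∀ p ∈ 𝔓, MeasurableSet (Etile α D Qx σ1 σ2 p)) →
      ∀ (𝔄 : Set (Tile dd)), 𝔄 ⊆ 𝔓 → 𝔄.Finite →
        (∀ p ∈ 𝔄, ∀ p' ∈ 𝔄, ¬ Tile.lt α D p p') →
      ∀ (C_M : ℝ), 0 < C_M →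
        (∀ f : (Fin dd → ℝ) → ℂ, Measurable f → PeriodicZ f →
          eL2T (MKT s_min s_max Ks f) ≤ ENNReal.ofReal C_M * eLpNorm f 2 (μT dd)) →
      ∀ f : (Fin dd → ℝ) → ℂ, Measurable f → PeriodicZ f →
        eLpNorm (Tsum α D Ks Qx σ1 σ2 𝔄 f) 2 (μT dd) ≤
          ENNReal.ofReal (C * C_M) * eLpNorm f 2 (μT dd) :=
  statement11_general dd d α

end
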